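/- arXiv:1805.03028 — 6 statements merged into one kernel-verified Lean document; each statement's English description precedes it below -/
import Mathlib

section
/- Let u, v be elements of the trace monoid M(Σ,D). Then u ≠ v if and only if, up to exchanging the roles of u and v, one of the following holds: (1) there exists a trace w ≠ 1 with v = u·w; (2) there exist traces w, w₁, w₂, w₃ and a letter a such that u = w·a·w₁, v = w·w₂·a·w₃, w₂ contains no occurrence of a, and w₂ contains an occurrence of some letter b ≠ a with ¬ D a b; (3) there exist traces w, w₁, w₂ and a letter a such that u = w·a·w₁, v = w·w₂, and w₂ contains no occurrence of a. -/
def traceRel {α : Type*} (D : α → α → Prop) (w₁ w₂ : FreeMonoid α) : Prop :=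
  ∃ a b, D a b ∧ w₁ = FreeMonoid.of a * FreeMonoid.of b ∧ w₂ = FreeMonoid.of b * FreeMonoid.of a

def traceCon {α : Type*} (D : α → α → Prop) : Con (FreeMonoid α) := conGen (traceRel D)

abbrev TraceMonoid {α : Type*} (D : α → α → Prop) : Type _ := (traceCon D).Quotient

def tracePi {α : Type*} (D : α → α → Prop) : FreeMonoid α →* TraceMonoid D := (traceCon D).mk'

/-- The trace `u` contains an occurrence of the letter `a`: some word representing `u`
contains `a` (equivalently, every word representing `u` does, since letter counts are
invariant under the congruence). -/
def hasLetter {α : Type*} (D : α → α → Prop) (a : α) (u : TraceMonoid D) : Prop :=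
  ∃ w : FreeMonoid α, tracePi D w = u ∧ a ∈ w.toList

/-- The three (one-sided) witnesses for the difference of two traces `u`, `v`:
(1) `u` is a strict prefix of `v`;
(2) `u = w a w₁`, `v = w w₂ a w₃` where `w₂` contains no `a` but contains an
occurrence of some `b ≠ a` not commuting with `a`;
(3) `u = w a w₁`, `v = w w₂` where `w₂` contains no `a`. -/
def diffWitness {α : Type*} (D : α → α → Prop) (u v : TraceMonoid D) : Prop :=
  (∃ w : TraceMonoid D, w ≠ 1 ∧ v = u * w) ∨
  (∃ (w w₁ w₂ w₃ : TraceMonoid D) (a : α),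
      u = w * tracePi D (FreeMonoid.of a) * w₁ ∧
      v = w * w₂ * tracePi D (FreeMonoid.of a) * w₃ ∧
      ¬ hasLetter D a w₂ ∧
      ∃ b : α, b ≠ a ∧ ¬ D a b ∧ hasLetter D b w₂) ∨
  (∃ (w w₁ w₂ : TraceMonoid D) (a : α),
      u = w * tracePi D (FreeMonoid.of a) * w₁ ∧
      v = w * w₂ ∧ ¬ hasLetter D a w₂)

namespace TraceAux

open FreeMonoid
open scoped Classical

variable {α : Type*} {D : α → α → Prop}

theorem con_le_ker {N : Type*} [Monoid N] (f : FreeMonoid α →* N)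
    (h : ∀ c d, D c d → f (of c * of d) = f (of d * of c)) :
    traceCon D ≤ Con.ker f := by
  apply (Con.conGen_le (r := traceRel D)).mpr
  rintro x y ⟨c, d, hcd, rfl, rfl⟩
  exact (Con.ker_rel f).mpr (h c d hcd)

/-! ### The length homomorphism -/

noncomputable def tlen (D : α → α → Prop) : TraceMonoid D →* Multiplicative ℕ :=
  (traceCon D).lift (FreeMonoid.lift fun _ => Multiplicative.ofAdd 1)
    (con_le_ker _ fun c d _ => by rw [map_mul, map_mul, mul_comm])

theorem tlen_pi (l : List α) :
    tlen D (tracePi D (ofList l)) = Multiplicative.ofAdd l.length := by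
  rw [show tlen D (tracePi D (ofList l))
      = FreeMonoid.lift (fun _ : α => Multiplicative.ofAdd 1) (ofList l) from
    Con.lift_mk' _ _]
  induction l with
  | nil => rfl
  | cons c l ih =>
    rw [ofList_cons, map_mul, lift_eval_of, ih, ← ofAdd_add, List.length_cons, Nat.add_comm]

theorem eq_one_of_tlen_eq_one {w : TraceMonoid D} (h : tlen D w = 1) : w = 1 := by
  obtain ⟨q, rfl⟩ := Con.mk'_surjective (c := traceCon D) w
  have h' : tlen D (tracePi D (ofList q.toList)) = 1 := h
  rw [tlen_pi] at h'
  have hq : q.toList.length = 0 := by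
    have := congrArg Multiplicative.toAdd h'
    simpa using this
  have : q = 1 := by
    have := List.length_eq_zero_iff.mp hq
    rw [← ofList_toList q, this]
    rfl
  rw [this, map_one]

/-! ### The letter-count homomorphism -/

noncomputable def countHom (a : α) : FreeMonoid α →* Multiplicative ℕ :=
  FreeMonoid.lift (fun c => Multiplicative.ofAdd (if c = a then 1 else 0))

noncomputable def tcount (D : α → α → Prop) (a : α) : TraceMonoid D →* Multiplicative ℕ :=
  (traceCon D).lift (countHom a) (con_le_ker _ fun c d _ => by rw [map_mul, map_mul, mul_comm])

theorem tcount_pi (a : α) (w : FreeMonoid α) :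
    tcount D a (tracePi D w) = countHom a w := Con.lift_mk' _ _

theorem tcount_pi_of (a : α) :
    tcount D a (tracePi D (of a)) = Multiplicative.ofAdd 1 := by
  rw [tcount_pi]
  show Multiplicative.ofAdd (if a = a then 1 else 0) = Multiplicative.ofAdd 1
  rw [if_pos rfl]

theorem countHom_eq_one {a : α} : ∀ {l : List α}, a ∉ l → countHom a (ofList l) = 1 := by
  intro l
  induction l with
  | nil => intro _; exact map_one _
  | cons c l ih =>
    intro h
    rw [ofList_cons, map_mul, ih (fun hm => h (List.mem_cons_of_mem _ hm))]
    have hca : ¬ (c = a) := fun hca => h (hca ▸ (List.mem_cons_self : c ∈ c :: l))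
    show Multiplicative.ofAdd (if c = a then 1 else 0) * 1 = 1
    rw [if_neg hca, mul_one]
    rfl

theorem countHom_ne_one {a : α} : ∀ {l : List α}, a ∈ l → countHom a (ofList l) ≠ 1 := by
  intro l
  induction l with
  | nil => intro h; cases h
  | cons c l ih =>
    intro h hcontra
    rw [ofList_cons, map_mul] at hcontra
    have h1 := congrArg Multiplicative.toAdd hcontra
    simp only [toAdd_mul, toAdd_one] at h1
    have hof : Multiplicative.toAdd (countHom a (of c)) = if c = a then 1 else 0 := by
      show Multiplicative.toAdd (Multiplicative.ofAdd (if c = a then 1 else 0)) = _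
      rw [toAdd_ofAdd]
    rcases List.mem_cons.mp h with rfl | hm
    · rw [if_pos rfl] at hof; omega
    · apply ih hm
      have h2 : Multiplicative.toAdd (countHom a (ofList l)) = 0 := by omega
      rw [← ofAdd_toAdd (countHom a (ofList l)), h2]
      rfl

theorem not_hasLetter {a : α} {l : List α} (h : a ∉ l) :
    ¬ hasLetter D a (tracePi D (ofList l)) := by
  rintro ⟨q, hq, haq⟩
  have h1 : tcount D a (tracePi D q) = tcount D a (tracePi D (ofList l)) := by rw [hq]
  rw [tcount_pi, tcount_pi, countHom_eq_one h] at h1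
  exact countHom_ne_one (l := q.toList) haq h1

theorem tcount_eq_one_of_not_hasLetter {a : α} {u : TraceMonoid D}
    (h : ¬ hasLetter D a u) : tcount D a u = 1 := by
  obtain ⟨q, rfl⟩ := Con.mk'_surjective (c := traceCon D) u
  have haq : a ∉ q.toList := fun hm => h ⟨q, rfl, hm⟩
  exact (tcount_pi a q).trans (countHom_eq_one haq)

/-! ### The projection homomorphism onto two non-commuting letters -/

noncomputable def pfun (a b : α) (c : α) : FreeMonoid α :=
  if c = a ∨ c = b then FreeMonoid.of c else 1

noncomputable def projHom (a b : α) : FreeMonoid α →* FreeMonoid α :=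
  FreeMonoid.lift (pfun a b)

theorem pfun_comm (hD : Symmetric D) {a b : α} (hab : ¬ D a b) {c d : α} (hcd : D c d) :
    pfun a b c * pfun a b d = pfun a b d * pfun a b c := by
  unfold pfun
  by_cases hc : c = a ∨ c = b
  · by_cases hd : d = a ∨ d = b
    · rw [if_pos hc, if_pos hd]
      rcases hc with rfl | rfl <;> rcases hd with rfl | rfl
      · rfl
      · exact absurd hcd hab
      · exact absurd (hD hcd) hab
      · rfl
    · rw [if_neg hd, mul_one, one_mul]
  · rw [if_neg hc, mul_one, one_mul]

noncomputable def tproj (D : α → α → Prop) (hD : Symmetric D) (a b : α) (hab : ¬ D a b) :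
    TraceMonoid D →* FreeMonoid α :=
  (traceCon D).lift (projHom a b)
    (con_le_ker _ fun c d hcd => by
      rw [show projHom a b (of c * of d) = pfun a b c * pfun a b d by
            rw [map_mul]; rfl,
          show projHom a b (of d * of c) = pfun a b d * pfun a b c by
            rw [map_mul]; rfl]
      exact pfun_comm hD hab hcd)

theorem tproj_pi (hD : Symmetric D) (a b : α) (hab : ¬ D a b) (w : FreeMonoid α) :
    tproj D hD a b hab (tracePi D w) = projHom a b w := Con.lift_mk' _ _

theorem projHom_of_left (a b : α) : projHom a b (of a) = of a := by
  show pfun a b a = of a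
  unfold pfun
  rw [if_pos (Or.inl rfl)]

theorem projHom_replicate {a b : α} :
    ∀ {l : List α}, a ∉ l →
      ∃ k, projHom a b (ofList l) = ofList (List.replicate k b) ∧ (b ∈ l → 0 < k) := by
  intro l
  induction l with
  | nil =>
    intro _
    exact ⟨0, map_one _, fun h => absurd h List.not_mem_nil⟩
  | cons c l ih =>
    intro h
    obtain ⟨k, hk, hkpos⟩ := ih (fun hm => h (List.mem_cons_of_mem _ hm))
    have hca : ¬ (c = a) := fun hca => h (hca ▸ (List.mem_cons_self : c ∈ c :: l))
    by_cases hcb : c = b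
    · refine ⟨k + 1, ?_, fun _ => Nat.succ_pos k⟩
      rw [ofList_cons, map_mul, hk,
        show projHom a b (of c) = of b by
          show pfun a b c = of b
          unfold pfun
          rw [if_pos (Or.inr hcb), hcb]]
      rw [show List.replicate (k + 1) b = b :: List.replicate k b from rfl, ofList_cons]
    · refine ⟨k, ?_, fun hb => hkpos (by
        rcases List.mem_cons.mp hb with rfl | hm
        · exact absurd rfl hcb
        · exact hm)⟩
      rw [ofList_cons, map_mul, hk,
        show projHom a b (of c) = 1 by
          show pfun a b c = 1
          unfold pfun
          rw [if_neg (by rintro (rfl | rfl) <;> [exact hca rfl; exact hcb rfl])]]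
      rw [one_mul]

/-! ### Commuting a letter past a word of letters it commutes with -/

theorem pi_eq_of_con {x y : FreeMonoid α} (h : traceCon D x y) :
    tracePi D x = tracePi D y := (Con.eq _).mpr h

theorem swap_single {a c : α} (h : D a c) :
    tracePi D (of c) * tracePi D (of a) = tracePi D (of a) * tracePi D (of c) := by
  rw [← map_mul, ← map_mul]
  exact (pi_eq_of_con (ConGen.Rel.of _ _ ⟨a, c, h, rfl, rfl⟩)).symm

theorem swap_all {a : α} :
    ∀ {l : List α}, (∀ c ∈ l, D a c) →
      tracePi D (ofList l) * tracePi D (of a) = tracePi D (of a) * tracePi D (ofList l) := by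
  intro l
  induction l with
  | nil => intro _; rw [show ofList ([] : List α) = 1 from rfl, map_one, one_mul, mul_one]
  | cons c l ih =>
    intro h
    rw [ofList_cons, map_mul, mul_assoc, ih (fun x hx => h x (List.mem_cons_of_mem _ hx)),
      ← mul_assoc, swap_single (h c ((List.mem_cons_self : c ∈ c :: l))), mul_assoc]

/-! ### Lifting witnesses by a left factor -/

theorem diffWitness_mul_left (t : TraceMonoid D) {u v : TraceMonoid D}
    (h : diffWitness D u v) : diffWitness D (t * u) (t * v) := by
  rcases h with ⟨w, hw, rfl⟩ | ⟨w, w₁, w₂, w₃, a, h1, h2, h3, h4⟩ | ⟨w, w₁, w₂, a, h1, h2, h3⟩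
  · exact Or.inl ⟨w, hw, (mul_assoc t u w).symm⟩
  · exact Or.inr (Or.inl ⟨t * w, w₁, w₂, w₃, a, by rw [h1]; simp [mul_assoc],
      by rw [h2]; simp [mul_assoc], h3, h4⟩)
  · exact Or.inr (Or.inr ⟨t * w, w₁, w₂, a, by rw [h1]; simp [mul_assoc],
      by rw [h2]; simp [mul_assoc], h3⟩)

/-! ### Splitting a list at the first occurrence of a letter -/

theorem exists_first_split {a : α} {l : List α} (h : a ∈ l) :
    ∃ l₁ l₂, l = l₁ ++ a :: l₂ ∧ a ∉ l₁ := by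
  induction h with
  | head l => exact ⟨[], l, rfl, (List.not_mem_nil : a ∉ [])⟩
  | @tail c l hmem ih =>
    by_cases hca : c = a
    · exact ⟨[], l, by rw [hca]; rfl, (List.not_mem_nil : a ∉ [])⟩
    · obtain ⟨l₁, l₂, rfl, h1⟩ := ih
      refine ⟨c :: l₁, l₂, rfl, ?_⟩
      intro hm
      rcases List.mem_cons.mp hm with rfl | hm'
      · exact hca rfl
      · exact h1 hm'

/-! ### Trichotomy -/

theorem tri (p : List α) (v : TraceMonoid D) :
    tracePi D (ofList p) = v ∨ diffWitness D (tracePi D (ofList p)) v ∨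
      diffWitness D v (tracePi D (ofList p)) := by
  induction p generalizing v with
  | nil =>
    by_cases h : v = 1
    · left; rw [h]; rfl
    · right; left
      exact Or.inl ⟨v, h, by rw [show tracePi D (ofList ([] : List α)) = 1 from rfl, one_mul]⟩
  | cons a p ih =>
    by_cases h : ∃ v', v = tracePi D (of a) * v'
    · obtain ⟨v', rfl⟩ := h
      rcases ih v' with h' | h' | h'
      · left; rw [ofList_cons, map_mul, h']
      · right; left
        rw [ofList_cons, map_mul]
        exact diffWitness_mul_left _ h'
      · right; right
        rw [ofList_cons, map_mul]
        exact diffWitness_mul_left _ h'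
    · by_cases ha : hasLetter D a v
      · obtain ⟨q, rfl, haq⟩ := ha
        obtain ⟨l₁, l₂, hq, hal₁⟩ := exists_first_split haq
        have hqeq : tracePi D q =
            tracePi D (ofList l₁) * (tracePi D (of a) * tracePi D (ofList l₂)) := by
          conv_lhs => rw [← ofList_toList q, hq, ofList_append, ofList_cons]
          rw [map_mul, map_mul]
        by_cases hb : ∃ b ∈ l₁, ¬ D a b
        · obtain ⟨b, hbl, hbD⟩ := hb
          right; left
          refine Or.inr (Or.inl ⟨1, tracePi D (ofList p), tracePi D (ofList l₁),
            tracePi D (ofList l₂), a, ?_, ?_, not_hasLetter hal₁, b, ?_, hbD,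
            ⟨ofList l₁, rfl, hbl⟩⟩)
          · rw [ofList_cons, map_mul, one_mul]
          · rw [hqeq, one_mul, mul_assoc]
          · rintro rfl; exact hal₁ hbl
        · push_neg at hb
          exfalso
          apply h
          refine ⟨tracePi D (ofList l₁) * tracePi D (ofList l₂), ?_⟩
          rw [hqeq, ← mul_assoc, swap_all hb, mul_assoc]
      · right; left
        refine Or.inr (Or.inr ⟨1, tracePi D (ofList p), v, a, ?_, (one_mul v).symm, ha⟩)
        rw [ofList_cons, map_mul, one_mul]

/-! ### Witnesses imply inequality -/

theorem diffWitness_ne (hD : Symmetric D) {u v : TraceMonoid D}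
    (h : diffWitness D u v) : u ≠ v := by
  rcases h with ⟨w, hw, hv⟩ | ⟨w, w₁, w₂, w₃, a, h1, h2, h3, b, hba, hab, h4⟩ |
    ⟨w, w₁, w₂, a, h1, h2, h3⟩
  · intro he
    rw [he] at hv
    apply hw
    apply eq_one_of_tlen_eq_one
    have h5 : tlen D v = tlen D v * tlen D w := by conv_lhs => rw [hv, map_mul]
    exact (left_eq_mul.mp h5)
  · intro he
    obtain ⟨q, hq, hbq⟩ := h4
    have haq : a ∉ q.toList := fun hmem => h3 ⟨q, hq, hmem⟩
    obtain ⟨k, hk, hkpos⟩ := projHom_replicate (b := b) haq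
    have hk1 : 0 < k := hkpos hbq
    have hTw₂ : tproj D hD a b hab w₂ = ofList (List.replicate k b) := by
      rw [← hq, tproj_pi]
      exact hk
    have hTa : tproj D hD a b hab (tracePi D (of a)) = of a := by
      rw [tproj_pi]; exact projHom_of_left a b
    have hu := congrArg (tproj D hD a b hab) he
    rw [h1, h2, map_mul, map_mul, map_mul, map_mul, map_mul, hTw₂, hTa] at hu
    have hlist := congrArg toList hu
    simp only [toList_mul, toList_ofList, toList_of, List.append_assoc] at hlist
    have hcancel := List.append_cancel_left hlist
    obtain ⟨k', rfl⟩ : ∃ k', k = k' + 1 := ⟨k - 1, by omega⟩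
    rw [show List.replicate (k' + 1) b = b :: List.replicate k' b from rfl] at hcancel
    simp only [List.cons_append, List.cons.injEq] at hcancel
    exact hba hcancel.1.symm
  · intro he
    have hc := congrArg (tcount D a) he
    rw [h1, h2, map_mul, map_mul, map_mul, tcount_pi_of,
      tcount_eq_one_of_not_hasLetter h3, mul_one] at hc
    have := congrArg Multiplicative.toAdd hc
    simp only [toAdd_mul, toAdd_ofAdd] at this
    omega

end TraceAux

/-- Two traces are different iff, up to exchanging the roles of `u` and `v`, one of the
three conditions of the lemma holds. -/
theorem ne_iff_diffWitness {α : Type*} (D : α → α → Prop) (hD : Symmetric D)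
    (u v : TraceMonoid D) :
    u ≠ v ↔ diffWitness D u v ∨ diffWitness D v u := by
  constructor
  · intro hne
    obtain ⟨p, rfl⟩ := Con.mk'_surjective (c := traceCon D) u
    rcases TraceAux.tri p.toList v with h | h | h
    · exact absurd h hne
    · exact Or.inl h
    · exact Or.inr h
  · rintro (h | h) he
    · exact TraceAux.diffWitness_ne hD h he
    · exact TraceAux.diffWitness_ne hD h he.symm
end

section
/- For every ordinal ξ, the ordinal ω^(ω^ξ) is prime: ω^(ω^ξ) > 1, and for all ordinals y, z, if ω^(ω^ξ) = y·z then z = 1 or z = ω^(ω^ξ). -/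
open Ordinal

/-- For every ordinal `ξ`, the ordinal `ω ^ ω ^ ξ` is prime: it is `> 1` and its only
right divisors are `1` and itself. -/
theorem omega_omega_pow_prime (ξ : Ordinal) :
    1 < ω ^ ω ^ ξ ∧ ∀ y z : Ordinal, ω ^ ω ^ ξ = y * z → z = 1 ∨ z = ω ^ ω ^ ξ := by
  have h1 : 1 < ω ^ ω ^ ξ := by simpa using (opow_lt_opow_iff_right one_lt_omega0).2 (opow_pos ξ omega0_pos)
  refine ⟨h1, fun y z hyz => ?_⟩
  have h0 : (0:Ordinal) < ω ^ ω ^ ξ := zero_lt_one.trans h1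
  have hy0 : 0 < y := by
    rcases eq_zero_or_pos y with rfl | hy
    · simp [hyz] at h0
    · exact hy
  have hz0 : 0 < z := by
    rcases eq_zero_or_pos z with rfl | hz
    · simp [hyz] at h0
    · exact hz
  have hzle : z ≤ ω ^ ω ^ ξ := hyz ▸ Ordinal.le_mul_right z hy0
  have hyle : y ≤ ω ^ ω ^ ξ := hyz ▸ Ordinal.le_mul_left y hz0
  rcases lt_or_eq_of_le hzle with hz | hz
  · rcases lt_or_eq_of_le hyle with hy | hy
    · exact absurd (hyz ▸ principal_mul_omega0_opow_opow ξ hy hz)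
        (lt_irrefl _)
    · left
      subst hy
      by_contra hz1
      have : 1 < z := lt_of_le_of_ne (Order.one_le_iff_pos.2 hz0) (Ne.symm hz1)
      have := mul_lt_mul_of_pos_left this h0
      rw [mul_one, ← hyz] at this
      exact lt_irrefl _ this
  · right; exact hz
end

section
/- For every ordinal λ ≥ 1, the ordinal ω^λ + 1 is prime: ω^λ + 1 > 1, and for all ordinals y, z, if ω^λ + 1 = y·z then z = 1 or z = ω^λ + 1. -/
open Ordinal

/-- For every ordinal `l ≥ 1`, the ordinal `ω ^ l + 1` is prime: it is `> 1` and its only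
right divisors are `1` and itself. -/
theorem omega_pow_add_one_prime {l : Ordinal} (hl : 1 ≤ l) :
    1 < ω ^ l + 1 ∧ ∀ y z : Ordinal, ω ^ l + 1 = y * z → z = 1 ∨ z = ω ^ l + 1 := by
  have hpos : 0 < ω ^ l := opow_pos l omega0_pos
  have hne : ω ^ l + 1 ≠ 0 := (hpos.trans (lt_add_one _)).ne'
  have hnl : ¬ Order.IsSuccLimit (ω ^ l + 1) := by
    intro hL
    have h2 := hL.succ_lt (lt_add_one (ω ^ l))
    rw [← Ordinal.add_one_eq_succ] at h2
    exact lt_irrefl _ h2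
  refine ⟨lt_of_le_of_lt (Order.one_le_iff_pos.mpr hpos) (lt_add_one _), ?_⟩
  intro y z h
  have hy0 : y ≠ 0 := by rintro rfl; simp at h
  rcases Ordinal.zero_or_succ_or_isSuccLimit z with rfl | ⟨w, rfl⟩ | hzl
  · simp at h
  · rcases eq_or_ne w 0 with rfl | hw0
    · left; simp
    · rcases Ordinal.zero_or_succ_or_isSuccLimit y with rfl | ⟨y', rfl⟩ | hyl
      · exact absurd rfl hy0
      · rw [← Ordinal.add_one_eq_succ, ← Ordinal.add_one_eq_succ] at h
        rw [mul_add, mul_one, ← add_assoc] at h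
        have hkey : ω ^ l = (y' + 1) * w + y' := by
          rw [Ordinal.add_one_eq_succ] at h
          exact Order.succ_injective h
        have hw1 : 1 ≤ w := Ordinal.one_le_iff_ne_zero.mpr hw0
        have hle : y' + 1 ≤ (y' + 1) * w :=
          le_mul_of_one_le_right zero_le hw1
        have hy'lt2 : y' < ω ^ l :=
          lt_of_lt_of_le ((lt_add_one y').trans_le hle) (hkey ▸ le_self_add)
        have hmul : (y' + 1) * w = ω ^ l := by
          by_contra hne2
          have hlt : (y' + 1) * w < ω ^ l :=
            lt_of_le_of_ne (hkey ▸ le_self_add) hne2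
          exact absurd hkey.symm
            (Ordinal.principal_add_omega0_opow l hlt hy'lt2).ne
        have hy'0 : y' = 0 := by
          rw [hmul] at hkey
          nth_rewrite 1 [← add_zero (ω ^ l)] at hkey
          exact ((add_right_inj _).mp hkey).symm
        right
        rw [← Ordinal.add_one_eq_succ]
        subst hy'0
        simpa using h.symm
      · exfalso
        have : Order.IsSuccLimit (y * Order.succ w) := by
          rw [Ordinal.mul_succ]
          exact Ordinal.isSuccLimit_add _ hyl
        exact hnl (h ▸ this)
  · exact absurd (h ▸ Ordinal.isSuccLimit_mul_right (pos_iff_ne_zero.mpr hy0) hzl) hnl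
end

section
/- Every prime ordinal is of exactly one of the following three forms: a finite prime (a natural number that is prime in the usual sense), a non-finite successor prime ω^λ + 1 for some ordinal λ ≥ 1, or a limit prime ω^(ω^ξ) for some ordinal ξ. -/
open Ordinal

lemma aux_mul_omega0 {b s : Ordinal} (h1 : ω ^ b ≤ s) (h2 : s < ω ^ (b + 1)) :
    s * ω = ω ^ (b + 1) := by
  apply le_antisymm
  · refine (mul_le_iff_of_isSuccLimit isSuccLimit_omega0).2 fun n hn => ?_
    exact (mul_lt_omega0_opow (lt_of_lt_of_le zero_lt_one (le_add_self (a := 1) (b := b))) h2 hn).le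
  · calc ω ^ (b + 1) = ω ^ b * ω := by rw [opow_add, opow_one]
      _ ≤ s * ω := mul_le_mul_left h1 ω

lemma aux_mul_opow {b s c : Ordinal} (h1 : ω ^ b ≤ s) (h2 : s < ω ^ (b + 1)) (hc : 1 ≤ c) :
    s * ω ^ c = ω ^ (b + c) := by
  obtain ⟨d, rfl⟩ : ∃ d, c = 1 + d := ⟨c - 1, (Ordinal.add_sub_cancel_of_le hc).symm⟩
  rw [opow_add, opow_one, ← mul_assoc, aux_mul_omega0 h1 h2, ← opow_add, add_assoc]

lemma aux_succ_mul_nat {a : Ordinal} (ha : 1 ≤ a) (m : ℕ) :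
    (ω ^ a + 1) * (m + 1 : ℕ) = ω ^ a * (m + 1 : ℕ) + 1 := by
  have hωa : ω ≤ ω ^ a := by simpa using opow_le_opow_right omega0_pos ha
  induction m with
  | zero => simp
  | succ k ih =>
      have : ((k + 1 + 1 : ℕ) : Ordinal) = ((k+1 : ℕ) : Ordinal) + 1 := by push_cast; ring
      rw [this, mul_add, mul_one, ih, mul_add, mul_one, add_assoc, add_assoc]
      congr 1
      rw [← add_assoc, one_add_of_omega0_le hωa]

lemma aux_forms_ne {l ξ : Ordinal} (hl : 1 ≤ l) : ω ^ l + 1 ≠ ω ^ ω ^ ξ := by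
  intro h
  obtain ⟨t, ht⟩ : ω ∣ ω ^ l := by
    simpa using opow_dvd_opow ω (show (1:Ordinal) ≤ l from hl)
  obtain ⟨u, hu⟩ : ω ∣ ω ^ ω ^ ξ := by
    simpa using opow_dvd_opow ω (show (1:Ordinal) ≤ ω ^ ξ from
      Order.one_le_iff_pos.2 (opow_pos _ omega0_pos))
  have h1 : (ω ^ l + 1) % ω = 1 := by
    rw [ht, mul_add_mod_self, mod_eq_of_lt one_lt_omega0]
  rw [h, hu, mul_mod] at h1
  exact zero_ne_one h1

/-- Main dichotomy for infinite primes. -/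
lemma aux_infinite_prime {x : Ordinal} (h1 : 1 < x)
    (hdiv : ∀ y z : Ordinal, x = y * z → z = 1 ∨ z = x) (hω : ω ≤ x) :
    (∃ l : Ordinal, 1 ≤ l ∧ x = ω ^ l + 1) ∨ (∃ ξ : Ordinal, x = ω ^ ω ^ ξ) := by
  -- x = ω * d + n with n < ω
  obtain ⟨n, hn⟩ := lt_omega0.1 (mod_lt x omega0_ne_zero)
  have hxd : ω * (x / ω) + n = x := by rw [← hn]; exact div_add_mod x ω
  -- n ≤ 1
  have hn1 : n ≤ 1 := by
    by_contra hcon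
    push_neg at hcon
    have hfact : x = (n : Ordinal) * (ω * (x / ω) + 1) := by
      rw [mul_add, mul_one, ← mul_assoc,
        natCast_mul_omega0 (show 0 < n by omega), hxd]
    rcases hdiv _ _ hfact with h | h
    · have h0 : ω * (x / ω) = 0 := by
        have hle : ω * (x / ω) + 1 ≤ 1 := h.le
        rw [Order.add_one_le_iff] at hle
        exact Ordinal.lt_one_iff_zero.1 hle
      rw [h0, zero_add, mul_one] at hfact
      exact absurd (hfact ▸ nat_lt_omega0 n) (not_lt.2 hω)
    · have hne : (n : Ordinal) = 1 := by
        have h2 : ω * (x / ω) + (n:Ordinal) = ω * (x / ω) + 1 := by rw [hxd, h]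
        exact add_left_cancel_iff.1 h2
      have : n = 1 := by exact_mod_cast hne
      omega
  -- Notation: γ = ω * (x / ω), so x = γ + n with n ≤ 1
  have hγω : ω ≤ ω * (x / ω) := by
    by_contra hcon
    push_neg at hcon
    have : x < ω := by
      rw [← hxd]
      exact principal_add_omega0 hcon (nat_lt_omega0 n)
    exact absurd this (not_lt.2 hω)
  have hγ0 : ω * (x / ω) ≠ 0 := fun h => by
    rw [h] at hγω; exact absurd hγω (not_le.2 omega0_pos)
  set γ := ω * (x / ω) with hγdef
  set a := log ω γ with hadef
  have ha1 : 1 ≤ a := by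
    have := (opow_le_iff_le_log one_lt_omega0 hγ0).1 (by rwa [opow_one])
    exact this
  have hωa_le : ω ^ a ≤ γ := opow_log_le_self ω hγ0
  have hγlt : γ < ω ^ (a + 1) := by
    rw [add_one_eq_succ]
    exact lt_opow_succ_log_self one_lt_omega0 γ
  have hdm : ω ^ a * (γ / ω ^ a) + γ % ω ^ a = γ := div_add_mod γ (ω ^ a)
  set q := γ / ω ^ a with hqdef
  set r := γ % ω ^ a with hrdef
  have hrlt : r < ω ^ a := mod_lt γ (opow_ne_zero a omega0_ne_zero)
  have hq1 : (1 : Ordinal) ≤ q := by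
    rw [Order.one_le_iff_pos, pos_iff_ne_zero]
    intro h0
    rw [h0, mul_zero, zero_add] at hdm
    exact absurd (hdm ▸ hrlt) (not_lt.2 hωa_le)
  have hqω : q < ω := by
    by_contra hcon
    push_neg at hcon
    have h2 : ω ^ (a + 1) ≤ ω ^ a * q := by
      rw [opow_add, opow_one]; exact mul_le_mul_right hcon _
    have h3 : ω ^ a * q ≤ γ := by
      conv_rhs => rw [← hdm]
      exact le_self_add
    exact absurd (h2.trans h3) (not_le.2 hγlt)
  obtain ⟨m, hm⟩ := lt_omega0.1 hqω
  have hm1 : 1 ≤ m := by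
    have := hm ▸ hq1
    exact_mod_cast this
  have hrmod : r % ω = 0 := by
    obtain ⟨a', ha'⟩ : ∃ a', a = 1 + a' := ⟨a - 1, (Ordinal.add_sub_cancel_of_le ha1).symm⟩
    have e1 : γ % ω = 0 := by rw [hγdef, mul_mod]
    have e2 : γ % ω = r % ω := by
      conv_lhs => rw [← hdm, ha', opow_add, opow_one, mul_assoc, mul_add_mod_self]
    rw [← e2, e1]
  have hγeq : γ = ω ^ a * m + r := by rw [← hdm, hm]
  rcases eq_or_ne r 0 with hr0 | hr0
  · -- r = 0 : γ = ω ^ a * m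
    have hγ : γ = ω ^ a * m := by rw [hγeq, hr0, add_zero]
    rcases Nat.lt_or_ge m 2 with hm2 | hm2
    · -- m = 1
      have hm1' : m = 1 := by omega
      have hγa : γ = ω ^ a := by rw [hγ, hm1', Nat.cast_one, mul_one]
      interval_cases n
      · -- x = ω ^ a : form 3
        have hxa : x = ω ^ a := by rw [← hxd, hγa, Nat.cast_zero, add_zero]
        right
        have habs : ∀ b < a, b + a = a := by
          intro b hb
          have hbd : b + (a - b) = a := Ordinal.add_sub_cancel_of_le hb.le
          have hfact : x = ω ^ b * ω ^ (a - b) := by rw [← opow_add, hbd, hxa]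
          rcases hdiv _ _ hfact with h | h
          · exfalso
            have h0 : a - b = 0 := by
              by_contra h0
              have h1 : (1 : Ordinal) < ω ^ (a - b) := by
                rw [← opow_zero ω]
                exact (opow_lt_opow_iff_right one_lt_omega0).2 (pos_iff_ne_zero.2 h0)
              exact h1.ne' h
            rw [h0, add_zero] at hbd
            exact hb.ne hbd
          · rw [hxa] at h
            have hda : a - b = a :=
              le_antisymm ((opow_le_opow_iff_right one_lt_omega0).1 h.le)
                ((opow_le_opow_iff_right one_lt_omega0).1 h.ge)
            conv_lhs => rw [← hda]
            exact hbd
        have hprin : Principal (· + ·) a := fun b c hb hc => by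
          have h := habs b hb
          calc b + c < b + a := add_lt_add_right hc b
            _ = a := h
        rcases principal_add_iff_zero_or_omega0_opow.1 hprin with h0 | ⟨ξ, hξ⟩
        · exact absurd h0 (pos_iff_ne_zero.1 (lt_of_lt_of_le zero_lt_one ha1))
        · have hξ' : ω ^ ξ = a := hξ
          exact ⟨ξ, by rw [hxa, ← hξ']⟩
      · -- x = ω ^ a + 1 : form 2
        left
        exact ⟨a, ha1, by rw [← hxd, hγa, Nat.cast_one]⟩
    · -- m ≥ 2 : contradiction
      exfalso
      interval_cases n
      · have hfact : x = ω ^ a * m := by rw [← hxd, hγ, Nat.cast_zero, add_zero]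
        rcases hdiv _ _ hfact with h | h
        · have : m = 1 := by exact_mod_cast h
          omega
        · rw [← h] at hω
          exact absurd (nat_lt_omega0 m) (not_lt.2 hω)
      · obtain ⟨k, hk⟩ : ∃ k, m = k + 1 := ⟨m - 1, by omega⟩
        have hfact : x = (ω ^ a + 1) * m := by
          rw [hk]
          push_cast
          rw [show ((k : Ordinal) + 1) = ((k + 1 : ℕ) : Ordinal) by push_cast; ring,
            aux_succ_mul_nat ha1 k, ← hxd, hγ, hk, Nat.cast_one]
        rcases hdiv _ _ hfact with h | h
        · have : m = 1 := by exact_mod_cast h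
          omega
        · rw [← h] at hω
          exact absurd (nat_lt_omega0 m) (not_lt.2 hω)
  · -- r ≠ 0 : contradiction
    exfalso
    have hrω : ω ≤ r := by
      by_contra hcon
      push_neg at hcon
      rw [mod_eq_of_lt hcon] at hrmod
      exact hr0 hrmod
    have hb1 : ω ^ log ω r ≤ r := opow_log_le_self ω hr0
    have hb2 : r < ω ^ (log ω r + 1) := by
      rw [add_one_eq_succ]
      exact lt_opow_succ_log_self one_lt_omega0 r
    have hba : log ω r < a := (lt_opow_iff_log_lt one_lt_omega0 hr0).1 hrlt
    have hc1 : (1 : Ordinal) ≤ a - log ω r := by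
      rw [Order.one_le_iff_pos, pos_iff_ne_zero]
      intro h0
      exact absurd (Ordinal.sub_eq_zero_iff_le.1 h0) (not_le.2 hba)
    have hbc : log ω r + (a - log ω r) = a := Ordinal.add_sub_cancel_of_le hba.le
    have hcle : ω ^ (a - log ω r) ≤ ω ^ a :=
      opow_le_opow_right omega0_pos (sub_le_self a _)
    have hzne1 : ω ^ (a - log ω r) * (m : Ordinal) + 1 ≠ 1 := by
      intro h
      have hle : ω ^ (a - log ω r) * (m : Ordinal) + 1 ≤ 1 := h.le
      rw [Order.add_one_le_iff, Ordinal.lt_one_iff_zero, mul_eq_zero] at hle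
      rcases hle with h' | h'
      · exact (opow_ne_zero _ omega0_ne_zero) h'
      · have : m = 0 := by exact_mod_cast h'
        omega
    interval_cases n
    · -- x = r * (ω ^ (a - log r) * m + 1)
      have hmulr : r * ω ^ (a - log ω r) = ω ^ a := by
        rw [aux_mul_opow hb1 hb2 hc1, hbc]
      have hfact : x = r * (ω ^ (a - log ω r) * m + 1) := by
        rw [mul_add, mul_one, ← mul_assoc, hmulr, ← hxd, hγeq, Nat.cast_zero, add_zero]
      rcases hdiv _ _ hfact with h | h
      · exact hzne1 h
      · have hzlt : ω ^ (a - log ω r) * m + 1 < x := by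
          rw [← hxd, hγeq, Nat.cast_zero, add_zero]
          calc ω ^ (a - log ω r) * m + 1 ≤ ω ^ a * m + 1 :=
                add_le_add_left (mul_le_mul_left hcle _) 1
            _ < ω ^ a * m + r := add_lt_add_right (lt_of_lt_of_le one_lt_omega0 hrω) _
        exact hzlt.ne h
    · -- x = (r + 1) * (ω ^ (a - log r) * m + 1)
      have hb1' : ω ^ log ω r ≤ r + 1 := hb1.trans (le_self_add (a := r) (b := 1))
      have hb2' : r + 1 < ω ^ (log ω r + 1) := by
        rw [add_one_eq_succ]
        exact (isSuccLimit_opow_left isSuccLimit_omega0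
          (by rw [add_one_eq_succ]; exact (succ_ne_zero _))).succ_lt hb2
      have hmulr' : (r + 1) * ω ^ (a - log ω r) = ω ^ a := by
        rw [aux_mul_opow hb1' hb2' hc1, hbc]
      have hfact : x = (r + 1) * (ω ^ (a - log ω r) * m + 1) := by
        rw [mul_add, mul_one, ← mul_assoc, hmulr', ← hxd, hγeq, Nat.cast_one, add_assoc]
      rcases hdiv _ _ hfact with h | h
      · exact hzne1 h
      · have hzlt : ω ^ (a - log ω r) * m + 1 < x := by
          rw [← hxd, hγeq, Nat.cast_one]
          calc ω ^ (a - log ω r) * m + 1 ≤ ω ^ a * m + 1 :=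
                add_le_add_left (mul_le_mul_left hcle _) 1
            _ < ω ^ a * m + r + 1 := by
                rw [add_assoc]
                refine add_lt_add_right ?_ _
                rw [add_one_eq_succ, Order.lt_succ_iff]
                exact one_lt_omega0.le.trans hrω
        exact hzlt.ne h

/-- Every prime ordinal is of exactly one of the following three forms: a finite prime,
a non-finite successor prime `ω ^ l + 1` with `l ≥ 1`, or a limit prime `ω ^ ω ^ ξ`. -/
theorem prime_ordinal_trichotomy {x : Ordinal}
    (hx : 1 < x ∧ ∀ y z : Ordinal, x = y * z → z = 1 ∨ z = x) :
    ((∃ n : ℕ, Nat.Prime n ∧ x = (n : Ordinal)) ∧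
        ¬ (∃ l : Ordinal, 1 ≤ l ∧ x = ω ^ l + 1) ∧ ¬ (∃ ξ : Ordinal, x = ω ^ ω ^ ξ)) ∨
    (¬ (∃ n : ℕ, Nat.Prime n ∧ x = (n : Ordinal)) ∧
        (∃ l : Ordinal, 1 ≤ l ∧ x = ω ^ l + 1) ∧ ¬ (∃ ξ : Ordinal, x = ω ^ ω ^ ξ)) ∨
    (¬ (∃ n : ℕ, Nat.Prime n ∧ x = (n : Ordinal)) ∧
        ¬ (∃ l : Ordinal, 1 ≤ l ∧ x = ω ^ l + 1) ∧ (∃ ξ : Ordinal, x = ω ^ ω ^ ξ)) := by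
  obtain ⟨h1, hdiv⟩ := hx
  by_cases hfin : x < ω
  · obtain ⟨n, rfl⟩ := lt_omega0.1 hfin
    have hn2 : 2 ≤ n := by exact_mod_cast h1
    left
    refine ⟨⟨n, ?_, rfl⟩, ?_, ?_⟩
    · rw [Nat.prime_def_lt]
      refine ⟨hn2, fun m hm hdvd => ?_⟩
      obtain ⟨k, hk⟩ := hdvd
      have hfact : (n : Ordinal) = (k : Ordinal) * (m : Ordinal) := by
        have : n = k * m := by rw [Nat.mul_comm]; exact hk
        rw [this]; push_cast; ring
      rcases hdiv _ _ hfact with h | h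
      · exact_mod_cast h
      · exfalso
        have : m = n := by exact_mod_cast h
        omega
    · rintro ⟨l, hl, hx2⟩
      have hle : ω ≤ (n : Ordinal) := by
        rw [hx2]
        calc ω = ω ^ (1 : Ordinal) := (opow_one ω).symm
          _ ≤ ω ^ l := opow_le_opow_right omega0_pos hl
          _ ≤ ω ^ l + 1 := le_self_add
      exact absurd (nat_lt_omega0 n) (not_lt.2 hle)
    · rintro ⟨ξ, hx3⟩
      have hle : ω ≤ (n : Ordinal) := by
        rw [hx3]
        calc ω = ω ^ (1 : Ordinal) := (opow_one ω).symm
          _ ≤ ω ^ ω ^ ξ := opow_le_opow_right omega0_pos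
                (Order.one_le_iff_pos.2 (opow_pos _ omega0_pos))
      exact absurd (nat_lt_omega0 n) (not_lt.2 hle)
  · push_neg at hfin
    have not1 : ¬ ∃ n : ℕ, Nat.Prime n ∧ x = (n : Ordinal) := by
      rintro ⟨n, _, rfl⟩
      exact absurd (nat_lt_omega0 n) (not_lt.2 hfin)
    rcases aux_infinite_prime h1 hdiv hfin with h2 | h3
    · refine Or.inr (Or.inl ⟨not1, h2, ?_⟩)
      rintro ⟨ξ, hξ⟩
      obtain ⟨l, hl, hx2⟩ := h2
      exact aux_forms_ne hl (by rw [← hx2]; exact hξ)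
    · refine Or.inr (Or.inr ⟨not1, ?_, h3⟩)
      rintro ⟨l, hl, hx2⟩
      obtain ⟨ξ, hξ⟩ := h3
      exact aux_forms_ne hl (by rw [← hx2]; exact hξ)
end

section
/- Every nonzero ordinal is a finite product of prime ordinals: for every ordinal α ≠ 0 there exists a finite list p₁, …, p_m of prime ordinals (possibly empty, with the empty product equal to 1) such that α = p₁·p₂·⋯·p_m. -/
open Ordinal

/-- An ordinal is prime if it is `> 1` and its only right divisors are `1` and itself. -/
def OrdinalPrime (x : Ordinal) : Prop :=
  1 < x ∧ ∀ y z : Ordinal, x = y * z → z = 1 ∨ z = x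

/-- Every nonzero ordinal is a finite product of prime ordinals (the empty product
being `1`). -/
theorem exists_prime_factorization {α : Ordinal} (hα : α ≠ 0) :
    ∃ l : List Ordinal, (∀ p ∈ l, OrdinalPrime p) ∧ α = l.prod := by
  induction α using Ordinal.induction with
  | h α IH =>
  rcases eq_or_lt_of_le (Ordinal.one_le_iff_ne_zero.mpr hα) with h1 | h1
  · exact ⟨[], by simp, h1.symm⟩
  · set S : Set Ordinal := {z | 1 < z ∧ ∃ β, α = β * z} with hSdef
    have hne : S.Nonempty := ⟨α, h1, 1, (one_mul α).symm⟩
    set z := Ordinal.lt_wf.min S hne with hz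
    obtain ⟨hz1, β, hβ⟩ : z ∈ S := Ordinal.lt_wf.min_mem S hne
    have hmin : ∀ w ∈ S, ¬ w < z := fun w hw => Ordinal.lt_wf.not_lt_min S hw
    -- z is prime
    have hzprime : OrdinalPrime z := by
      refine ⟨hz1, fun y w h => ?_⟩
      have hy0 : y ≠ 0 := by
        rintro rfl; rw [zero_mul] at h; exact absurd h.symm (hz1.trans' one_pos).ne
      have hw0 : w ≠ 0 := by
        rintro rfl; rw [mul_zero] at h; exact absurd h.symm (hz1.trans' one_pos).ne
      rcases eq_or_lt_of_le (Ordinal.one_le_iff_ne_zero.mpr hw0) with hw1 | hw1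
      · exact Or.inl hw1.symm
      · right
        have hwS : w ∈ S := ⟨hw1, β * y, by rw [hβ, h, mul_assoc]⟩
        have hle : w ≤ z := by
          calc w = 1 * w := (one_mul w).symm
          _ ≤ y * w := mul_le_mul_left (Ordinal.one_le_iff_ne_zero.mpr hy0) w
          _ = z := h.symm
        exact hle.antisymm (not_lt.mp (hmin w hwS))
    have hβ0 : β ≠ 0 := by
      rintro rfl; rw [zero_mul] at hβ; exact hα hβ
    have hβlt : β < α := by
      calc β = β * 1 := (mul_one β).symm
      _ < β * z := mul_lt_mul_of_pos_left hz1 (pos_iff_ne_zero.mpr hβ0)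
      _ = α := hβ.symm
    obtain ⟨l, hl, hlp⟩ := IH β hβlt hβ0
    refine ⟨l ++ [z], ?_, ?_⟩
    · intro p hp
      rcases List.mem_append.mp hp with hp | hp
      · exact hl p hp
      · rw [List.mem_singleton.mp hp]; exact hzprime
    · rw [List.prod_append, List.prod_singleton, ← hlp, ← hβ]
end

section
/- Let C be the free commutative monoid on the set of prime natural numbers (finitely supported functions from the primes to ℕ, written multiplicatively), let S be the set of ordinals of the form ω^μ + 1 with μ ≥ 1, and let F be the free monoid on S. Let f be the monoid homomorphism from the free product (monoid coproduct) C ∗ F to the ordinals under ordinal multiplication determined by sending the generator of C corresponding to a prime natural number p to the finite ordinal p, and the free generator of F corresponding to q ∈ S to the ordinal q. Then f is injective and its range is exactly the set of successor ordinals. -/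
open Ordinal

/-- The free commutative monoid on the set of prime natural numbers: finitely supported
functions from the primes to `ℕ`, written multiplicatively. -/
abbrev PrimeFreeCommMonoid : Type := Multiplicative ({p : ℕ // p.Prime} →₀ ℕ)

/-- The set of non-finite successor primes `ω ^ μ + 1` with `μ ≥ 1`, as a type. -/
abbrev SuccPrime : Type 1 := {o : Ordinal // ∃ μ : Ordinal, 1 ≤ μ ∧ o = ω ^ μ + 1}

namespace CoprodOrd



/-- successor predicate -/
def IsS (α : Ordinal) : Prop := ∃ γ : Ordinal, α = γ + 1

theorem isS_one : IsS 1 := ⟨0, (zero_add 1).symm⟩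

theorem IsS.ne_zero {α} (h : IsS α) : α ≠ 0 := by
  obtain ⟨γ, rfl⟩ := h; exact (add_one_eq_succ γ) ▸ (Order.succ_ne_bot γ)

theorem IsS.pos {α} (h : IsS α) : 0 < α := pos_iff_ne_zero.2 h.ne_zero

theorem isS_mul {α β : Ordinal} (ha : IsS α) (hb : IsS β) : IsS (α * β) := by
  obtain ⟨γ, rfl⟩ := ha; obtain ⟨δ, rfl⟩ := hb
  exact ⟨(γ + 1) * δ + γ, by rw [mul_add, mul_one, add_assoc]⟩

theorem isS_nat {n : ℕ} (hn : 0 < n) : IsS (n : Ordinal) := by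
  obtain ⟨m, rfl⟩ := Nat.exists_eq_succ_of_ne_zero hn.ne'
  exact ⟨m, Nat.cast_succ m⟩

theorem isS_not_omega_dvd {α : Ordinal} (h : IsS α) : ¬ ω ∣ α := by
  rintro ⟨c, rfl⟩
  rcases eq_zero_or_pos c with rfl | hc
  · rw [mul_zero] at h; exact h.ne_zero rfl
  have hl : Order.IsSuccLimit (ω * c) := isSuccLimit_mul_left isSuccLimit_omega0 hc
  obtain ⟨γ, hγ⟩ := h
  have : γ < ω * c := by rw [hγ]; exact lt_add_one γ
  have := hl.succ_lt this
  rw [← add_one_eq_succ, ← hγ] at this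
  exact this.false

/-- uniqueness of division -/
theorem div_mod_unique {b q r : Ordinal} (b0 : b ≠ 0) (hr : r < b) :
    (b * q + r) / b = q ∧ (b * q + r) % b = r := by
  have hdiv : (b * q + r) / b = q := by
    rw [mul_add_div _ b0, div_eq_zero_of_lt hr, add_zero]
  exact ⟨hdiv, by rw [mod_def, hdiv, add_sub_cancel]⟩

theorem isS_or_omega_dvd {β : Ordinal} (hβ : β ≠ 0) : IsS β ∨ ω ∣ β := by
  have h := div_add_mod β ω
  rcases Ordinal.lt_omega0.1 (mod_lt β omega0_ne_zero) with ⟨n, hn⟩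
  rcases Nat.eq_zero_or_pos n with rfl | hpos
  · right; exact dvd_of_mod_eq_zero (by rw [hn]; simp)
  · left
    obtain ⟨m, rfl⟩ := Nat.exists_eq_succ_of_ne_zero hpos.ne'
    refine ⟨ω * (β / ω) + m, ?_⟩
    conv_lhs => rw [← h, hn]
    push_cast
    rw [add_assoc]


theorem omega_dvd_opow {μ : Ordinal} (hμ : 1 ≤ μ) : ω ∣ ω ^ μ :=
  ⟨ω ^ (μ - 1), by rw [← opow_one_add, Ordinal.add_sub_cancel_of_le hμ]⟩

theorem nat_lt_opow {n : ℕ} {μ : Ordinal} (hμ : 1 ≤ μ) : (n : Ordinal) < ω ^ μ :=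
  (nat_lt_omega0 n).trans_le (by simpa using opow_le_opow_right omega0_pos hμ)

/-- the key distributivity identity -/
theorem aux_B {μ : Ordinal} (hμ : 1 ≤ μ) (n : ℕ) (δ : Ordinal) :
    (ω ^ μ + n) * δ + ω ^ μ = ω ^ μ * δ + ω ^ μ := by
  induction δ using Ordinal.limitRecOn with
  | zero => simp
  | add_one δ ih =>
    have habs : (ω ^ μ + (n : Ordinal)) + ω ^ μ = ω ^ μ + ω ^ μ := by
      rw [add_assoc, add_absorp (nat_lt_opow hμ) le_rfl]
    rw [mul_add, mul_add, mul_one, mul_one, add_assoc, habs,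
      ← add_assoc, ih, add_assoc]
  | limit δ hδ ih =>
    apply le_antisymm
    · apply add_le_add_left _ (ω ^ μ)
      rw [mul_le_iff_of_isSuccLimit hδ]
      intro x hx
      calc (ω ^ μ + ↑n) * x ≤ (ω ^ μ + ↑n) * x + ω ^ μ := le_self_add
        _ = ω ^ μ * x + ω ^ μ := ih x hx
        _ = ω ^ μ * (x + 1) := by rw [mul_add, mul_one]
        _ ≤ ω ^ μ * δ := mul_le_mul_right (by
            rw [add_one_eq_succ]; exact (hδ.succ_lt hx).le) _
    · exact add_le_add_left (mul_le_mul_left (le_self_add) δ) _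

theorem key_mul {n : ℕ} (hn : 0 < n) {μ β : Ordinal} (hμ : 1 ≤ μ) (hβ : IsS β) :
    (n : Ordinal) * ((ω ^ μ + 1) * β) = ω ^ μ * β + n := by
  obtain ⟨δ, rfl⟩ := hβ
  rw [← mul_assoc]
  have h1 : (n : Ordinal) * (ω ^ μ + 1) = ω ^ μ + n := by
    rw [mul_add, mul_one]
    congr 1
    exact mul_omega0_dvd (by exact_mod_cast hn) (nat_lt_omega0 n) (omega_dvd_opow hμ)
  rw [h1, mul_add, mul_add, mul_one, mul_one, ← add_assoc, aux_B hμ]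


/-- the natural number equal to `α % ω` -/
noncomputable def nP (α : Ordinal) : ℕ :=
  Classical.choose (Ordinal.lt_omega0.1 (mod_lt α omega0_ne_zero))

theorem nP_spec (α : Ordinal) : (nP α : Ordinal) = α % ω :=
  (Classical.choose_spec (Ordinal.lt_omega0.1 (mod_lt α omega0_ne_zero))).symm

noncomputable def gP (α : Ordinal) : Ordinal := ω * (α / ω)

noncomputable def muP (α : Ordinal) : Ordinal := sInf {ν : Ordinal | ¬ ω ^ (ν + 1) ∣ gP α}

noncomputable def bP (α : Ordinal) : Ordinal := gP α / ω ^ muP α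

theorem sInf_mem_aux {γ : Ordinal} (hγ : γ ≠ 0) :
    {ν : Ordinal | ¬ ω ^ (ν + 1) ∣ γ}.Nonempty := by
  refine ⟨γ, fun hdvd => ?_⟩
  have h1 : γ < ω ^ (γ + 1) :=
    (right_le_opow γ one_lt_omega0).trans_lt
      ((opow_lt_opow_iff_right one_lt_omega0).2 (lt_add_one γ))
  exact h1.not_ge (le_of_dvd hγ hdvd)

/-- `ω ^ sInf S` divides `γ`. -/
theorem opow_sInf_dvd {γ : Ordinal} (hγ : γ ≠ 0) :
    ω ^ sInf {ν : Ordinal | ¬ ω ^ (ν + 1) ∣ γ} ∣ γ := by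
  set S := {ν : Ordinal | ¬ ω ^ (ν + 1) ∣ γ} with hS
  have hlt : ∀ ν < sInf S, ω ^ (ν + 1) ∣ γ := by
    intro ν hν
    by_contra hd
    exact hν.not_ge (csInf_le' hd)
  rcases Ordinal.zero_or_succ_or_isSuccLimit (sInf S) with h0 | ⟨ν, hν⟩ | hlim
  · rw [h0, opow_zero]; exact one_dvd γ
  · rw [← hν, ← add_one_eq_succ]
    exact hlt ν (by rw [← hν, ← add_one_eq_succ]; exact lt_add_one ν)
  · -- limit case
    set μ := sInf S
    have hr : γ % ω ^ μ < ω ^ μ := mod_lt γ (opow_ne_zero μ omega0_ne_zero)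
    rcases (lt_opow_of_isSuccLimit omega0_ne_zero hlim).1 hr with ⟨ν, hνμ, hrν⟩
    have hd1 : ω ^ (ν + 1) ∣ γ := hlt ν hνμ
    have hsucc : ν + 1 ≤ μ := by
      rw [add_one_eq_succ]; exact (hlim.succ_lt hνμ).le
    obtain ⟨c, hc⟩ := opow_dvd_opow ω hsucc
    have heq : γ = ω ^ (ν + 1) * (c * (γ / ω ^ μ)) + γ % ω ^ μ := by
      conv_lhs => rw [← div_add_mod γ (ω ^ μ)]
      rw [← mul_assoc, ← hc]
    have hmod : γ % ω ^ (ν + 1) = γ % ω ^ μ := by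
      conv_lhs => rw [heq]
      exact (div_mod_unique (opow_ne_zero _ omega0_ne_zero)
        (hrν.trans_le (opow_le_opow_right omega0_pos (le_self_add)))).2
    have h0 : γ % ω ^ (ν + 1) = 0 := mod_eq_zero_of_dvd hd1
    rw [hmod] at h0
    exact dvd_of_mod_eq_zero h0


theorem gP_ne_zero {α : Ordinal} (h : ¬ α < ω) : gP α ≠ 0 := by
  intro h0
  have hd := div_add_mod α ω
  rw [show ω * (α / ω) = gP α from rfl, h0, zero_add] at hd
  exact h (hd ▸ mod_lt α omega0_ne_zero)

theorem muP_mem {α : Ordinal} (h : ¬ α < ω) :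
    ¬ ω ^ (muP α + 1) ∣ gP α := csInf_mem (sInf_mem_aux (gP_ne_zero h))

theorem muP_pos {α : Ordinal} (h : ¬ α < ω) : 1 ≤ muP α := by
  rw [Ordinal.one_le_iff_ne_zero]
  intro h0
  have hmem := muP_mem h
  rw [h0] at hmem
  exact hmem (by rw [zero_add, opow_one]; exact ⟨α / ω, rfl⟩)

theorem opow_muP_dvd {α : Ordinal} (h : ¬ α < ω) : ω ^ muP α ∣ gP α :=
  opow_sInf_dvd (gP_ne_zero h)

theorem nP_pos {α : Ordinal} (hs : IsS α) : 0 < nP α := by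
  rcases Nat.eq_zero_or_pos (nP α) with h0 | h
  · exfalso
    apply isS_not_omega_dvd hs
    apply dvd_of_mod_eq_zero
    rw [← nP_spec, h0, Nat.cast_zero]
  · exact h

theorem decomp {α : Ordinal} (hs : IsS α) (h : ¬ α < ω) :
    α = ω ^ muP α * bP α + nP α ∧ IsS (bP α) ∧ bP α < α := by
  obtain ⟨c, hc⟩ := opow_muP_dvd h
  have hbp : ω ^ muP α * bP α = gP α := by
    rw [show bP α = gP α / ω ^ muP α from rfl, hc,
      mul_div_cancel _ (opow_ne_zero _ omega0_ne_zero)]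
  have hα : α = ω ^ muP α * bP α + nP α := by
    rw [hbp, nP_spec, show gP α = ω * (α / ω) from rfl, div_add_mod]
  have hbne : bP α ≠ 0 := by
    intro h0
    rw [h0, mul_zero] at hbp
    exact gP_ne_zero h hbp.symm
  have hbS : IsS (bP α) := by
    rcases isS_or_omega_dvd hbne with hS | ⟨d, hd⟩
    · exact hS
    · exfalso
      apply muP_mem h
      refine ⟨d, ?_⟩
      rw [← hbp, hd, ← mul_assoc, opow_add, opow_one, mul_assoc]
  have hblt : bP α < α := by
    have h1 : bP α ≤ gP α := hbp ▸ le_mul_right _ (opow_pos _ omega0_pos)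
    have h2 : gP α < α := by
      conv_rhs => rw [← div_add_mod α ω]
      rw [show ω * (α / ω) = gP α from rfl]
      have h3 : (0:Ordinal) < α % ω := by
        rw [← nP_spec]; exact_mod_cast nP_pos hs
      calc gP α = gP α + 0 := (add_zero _).symm
        _ < gP α + α % ω := (add_lt_add_iff_left _).2 h3
    exact h1.trans_lt h2
  exact ⟨hα, hbS, hblt⟩

theorem extract {n : ℕ} (hn : 0 < n) {μ β : Ordinal} (hμ : 1 ≤ μ) (hβ : IsS β) :
    nP (ω ^ μ * β + n) = n ∧ muP (ω ^ μ * β + n) = μ ∧ bP (ω ^ μ * β + n) = β ∧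
      IsS (ω ^ μ * β + n) ∧ ¬ (ω ^ μ * β + n) < ω := by
  obtain ⟨e, he⟩ := (omega_dvd_opow hμ).mul_right β
  have hdm := div_mod_unique (q := e) (r := (n : Ordinal)) omega0_ne_zero (nat_lt_omega0 n)
  have hdiv : (ω ^ μ * β + n) / ω = e := by rw [he]; exact hdm.1
  have hmod : (ω ^ μ * β + n) % ω = n := by rw [he]; exact hdm.2
  have hnP : nP (ω ^ μ * β + n) = n := by
    have := nP_spec (ω ^ μ * β + n)
    rw [hmod] at this
    exact_mod_cast this
  have hgP : gP (ω ^ μ * β + n) = ω ^ μ * β := by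
    rw [show gP (ω ^ μ * β + n) = ω * ((ω ^ μ * β + n) / ω) from rfl, hdiv, ← he]
  have hne : ¬ (ω ^ μ * β + n) < ω := by
    apply not_lt.2
    calc ω = ω ^ (1:Ordinal) := (opow_one ω).symm
      _ ≤ ω ^ μ := opow_le_opow_right omega0_pos hμ
      _ ≤ ω ^ μ * β := le_mul_left _ hβ.pos
      _ ≤ ω ^ μ * β + n := le_self_add
  have hmuP : muP (ω ^ μ * β + n) = μ := by
    apply le_antisymm
    · apply csInf_le'
      intro hdvd
      obtain ⟨c, hc⟩ := hdvd
      rw [hgP] at hc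
      have hc2 : ω ^ μ * β = ω ^ μ * (ω * c) := by
        rw [hc, opow_add, opow_one, mul_assoc]
      have hβc : β = ω * c := by
        have h5 := congrArg (· / ω ^ μ) hc2
        simpa [mul_div_cancel _ (opow_ne_zero μ omega0_ne_zero)] using h5
      exact isS_not_omega_dvd hβ ⟨c, hβc⟩
    · apply le_csInf (sInf_mem_aux (by
        rw [hgP]; exact _root_.mul_ne_zero (opow_ne_zero _ omega0_ne_zero) hβ.ne_zero))
      intro ν hν
      by_contra hlt
      push_neg at hlt
      apply hν
      rw [hgP]
      have h6 : ν + 1 ≤ μ := by rw [add_one_eq_succ]; exact Order.succ_le_of_lt hlt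
      exact (opow_dvd_opow ω h6).mul_right β
  have hbP : bP (ω ^ μ * β + n) = β := by
    rw [show bP (ω ^ μ * β + n) = gP (ω ^ μ * β + n) / ω ^ muP (ω ^ μ * β + n) from rfl,
      hgP, hmuP, mul_div_cancel _ (opow_ne_zero _ omega0_ne_zero)]
  have hS : IsS (ω ^ μ * β + n) := by
    obtain ⟨m, rfl⟩ := Nat.exists_eq_succ_of_ne_zero hn.ne'
    exact ⟨ω ^ μ * β + m, by push_cast; rw [add_assoc]⟩
  exact ⟨hnP, hmuP, hbP, hS, hne⟩


/-- prime factorization of a natural number, as a finsupp on the subtype of primes -/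
noncomputable def pf (n : ℕ) : {p : ℕ // p.Prime} →₀ ℕ :=
  Finsupp.subtypeDomain Nat.Prime n.factorization

/-- evaluation of a finsupp on primes as a natural number -/
def Nval (d : {p : ℕ // p.Prime} →₀ ℕ) : ℕ := d.prod fun p k => p.val ^ k

theorem Nval_pos (d : {p : ℕ // p.Prime} →₀ ℕ) : 0 < Nval d :=
  Finset.prod_pos fun p _ => pow_pos p.2.pos _

theorem Nval_zero : Nval 0 = 1 := by simp [Nval]

theorem Nval_mul (c d : {p : ℕ // p.Prime} →₀ ℕ) : Nval (c + d) = Nval c * Nval d :=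
  Finsupp.prod_add_index' (by simp) (by intro a b₁ b₂; rw [pow_add])

theorem Nval_single (p : {p : ℕ // p.Prime}) (k : ℕ) :
    Nval (Finsupp.single p k) = p.val ^ k :=
  Finsupp.prod_single_index (by simp)

theorem pf_mul {m n : ℕ} (hm : m ≠ 0) (hn : n ≠ 0) : pf (m * n) = pf m + pf n := by
  rw [pf, pf, pf, Nat.factorization_mul hm hn, Finsupp.subtypeDomain_add]

theorem pf_one : pf 1 = 0 := by
  rw [pf, Nat.factorization_one]; rfl

theorem pf_prime_pow (p : {p : ℕ // p.Prime}) (k : ℕ) :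
    pf (p.val ^ k) = Finsupp.single p k := by
  rw [pf, Nat.Prime.factorization_pow p.2]
  ext q
  simp only [Finsupp.subtypeDomain_apply, Finsupp.single_apply]
  by_cases h : p = q
  · subst h; simp
  · rw [if_neg h, if_neg (fun hv => h (Subtype.ext hv))]

theorem pf_Nval (d : {p : ℕ // p.Prime} →₀ ℕ) : pf (Nval d) = d := by
  induction d using Finsupp.induction with
  | zero => rw [Nval_zero, pf_one]
  | single_add p k d hsup hk ih =>
    rw [Nval_mul, Nval_single, pf_mul (pow_ne_zero _ p.2.pos.ne') (Nval_pos d).ne',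
      pf_prime_pow, ih]

theorem Nval_pf {n : ℕ} (hn : n ≠ 0) : Nval (pf n) = n := by
  rw [Nval, pf,
    Finsupp.prod_subtypeDomain_index (fun x hx => Nat.prime_of_mem_primeFactors (by simpa using hx))]
  exact Nat.factorization_prod_pow_eq_self hn


open Multiplicative

open scoped Classical in
/-- the factorization map: inverse to evaluation -/
noncomputable def s (α : Ordinal) : Monoid.Coprod PrimeFreeCommMonoid (FreeMonoid SuccPrime) :=
  if h : IsS α ∧ ¬ α < ω then
    Monoid.Coprod.inl (ofAdd (pf (nP α))) *
      (Monoid.Coprod.inr (FreeMonoid.of ⟨ω ^ muP α + 1, muP α, muP_pos h.2, rfl⟩) * s (bP α))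
  else
    Monoid.Coprod.inl (ofAdd (pf (nP α)))
termination_by α
decreasing_by exact (decomp h.1 h.2).2.2

theorem s_nat (n : ℕ) : s n = Monoid.Coprod.inl (ofAdd (pf n)) := by
  have hn : nP (n : Ordinal) = n := by
    have h := nP_spec (n : Ordinal)
    rw [mod_eq_of_lt (nat_lt_omega0 n)] at h
    exact_mod_cast h
  rw [s, dif_neg (fun hc => hc.2 (nat_lt_omega0 n)), hn]

theorem s_succ_eq {n : ℕ} (hn : 0 < n) {μ β : Ordinal} (hμ : 1 ≤ μ) (hβ : IsS β) :
    s (ω ^ μ * β + n) = Monoid.Coprod.inl (ofAdd (pf n)) *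
      (Monoid.Coprod.inr (FreeMonoid.of ⟨ω ^ μ + 1, μ, hμ, rfl⟩) * s β) := by
  obtain ⟨hnP, hmuP, hbP, hS, hlt⟩ := extract hn hμ hβ
  rw [s, dif_pos ⟨hS, hlt⟩, hnP, hbP]
  exact congrArg (fun z : SuccPrime => Monoid.Coprod.inl (ofAdd (pf n)) *
    (Monoid.Coprod.inr (FreeMonoid.of z) * s β)) (Subtype.ext (by
      show ω ^ muP (ω ^ μ * β + (n : Ordinal)) + 1 = ω ^ μ + 1
      rw [hmuP]))

theorem s_nat_mul {n : ℕ} (hn : 0 < n) {β : Ordinal} (hβ : IsS β) :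
    s ((n : Ordinal) * β) = Monoid.Coprod.inl (ofAdd (pf n)) * s β := by
  by_cases h : β < ω
  · obtain ⟨m, rfl⟩ := Ordinal.lt_omega0.1 h
    have hm : 0 < m := by exact_mod_cast hβ.pos
    rw [← natCast_mul, s_nat, s_nat, pf_mul hn.ne' hm.ne', ofAdd_add, map_mul]
  · obtain ⟨hα, hbS, _⟩ := decomp hβ h
    have hμ := muP_pos h
    have hm := nP_pos hβ
    rw [hα]
    have hmul : (n : Ordinal) * (ω ^ muP β * bP β + nP β) =
        ω ^ muP β * bP β + ((n * nP β : ℕ) : Ordinal) := by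
      rw [mul_add]
      congr 1
      · exact mul_omega0_dvd (by exact_mod_cast hn) (nat_lt_omega0 n)
          ((omega_dvd_opow hμ).mul_right _)
      · rw [natCast_mul]
    rw [hmul, s_succ_eq (Nat.mul_pos hn hm) hμ hbS, s_succ_eq hm hμ hbS,
      pf_mul hn.ne' hm.ne', ofAdd_add, map_mul, mul_assoc]

theorem s_q_mul {μ : Ordinal} (hμ : 1 ≤ μ) {β : Ordinal} (hβ : IsS β) :
    s ((ω ^ μ + 1) * β) =
      Monoid.Coprod.inr (FreeMonoid.of ⟨ω ^ μ + 1, μ, hμ, rfl⟩) * s β := by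
  have h1 : (ω ^ μ + 1) * β = ω ^ μ * β + ((1 : ℕ) : Ordinal) := by
    have h := key_mul (n := 1) one_pos hμ hβ
    rw [← h, Nat.cast_one, one_mul]
  rw [h1, s_succ_eq one_pos hμ hβ, pf_one, ofAdd_zero, map_one, one_mul]


end CoprodOrd

open CoprodOrd Multiplicative

/-- Any monoid homomorphism `f` from the free product of the free commutative monoid on
the finite primes and the free monoid on the non-finite successor primes to the ordinals
under ordinal multiplication which sends the generator corresponding to a finite prime
`p` to `p` and the free generator corresponding to `q = ω ^ μ + 1` to `q` is injective,
and its range is exactly the set of successor ordinals. -/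
theorem coprod_to_ordinals_injective_range_successors
    (f : Monoid.Coprod (PrimeFreeCommMonoid) (FreeMonoid SuccPrime) →* Ordinal)
    (hC : ∀ p : {p : ℕ // p.Prime},
        f (Monoid.Coprod.inl (Multiplicative.ofAdd (Finsupp.single p 1))) = (p.val : Ordinal))
    (hF : ∀ q : SuccPrime, f (Monoid.Coprod.inr (FreeMonoid.of q)) = q.val) :
    Function.Injective f ∧ Set.range f = {o : Ordinal | ∃ γ : Ordinal, o = γ + 1} := by
  have f_single : ∀ (p : {p : ℕ // p.Prime}) (k : ℕ),
      f (Monoid.Coprod.inl (ofAdd (Finsupp.single p k))) = ((p.val ^ k : ℕ) : Ordinal) := by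
    intro p k
    induction k with
    | zero => simp
    | succ k ih =>
      rw [show Finsupp.single p (k + 1) = Finsupp.single p k + Finsupp.single p 1 by
            rw [← Finsupp.single_add],
        ofAdd_add, map_mul, map_mul, ih, hC, pow_succ, natCast_mul]
  have f_inl : ∀ d : {p : ℕ // p.Prime} →₀ ℕ,
      f (Monoid.Coprod.inl (ofAdd d)) = ((Nval d : ℕ) : Ordinal) := by
    intro d
    induction d using Finsupp.induction with
    | zero => simp [Nval_zero]
    | single_add p k d hsup hk ih =>
      rw [ofAdd_add, map_mul, map_mul, ih, f_single, Nval_mul, Nval_single, ← natCast_mul]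
  have f_isS : ∀ x, IsS (f x) := by
    intro x
    induction x using Monoid.Coprod.induction_on with
    | inl c =>
      have h := f_inl (toAdd c)
      rw [ofAdd_toAdd] at h
      rw [h]
      exact isS_nat (Nval_pos _)
    | inr w =>
      induction w using FreeMonoid.inductionOn' with
      | one => rw [map_one, map_one]; exact isS_one
      | of_mul q w ih =>
        rw [map_mul, map_mul, hF]
        obtain ⟨μ, hμ, hq⟩ := q.2
        exact isS_mul (hq ▸ ⟨ω ^ μ, rfl⟩) ih
    | mul x y ihx ihy => rw [map_mul]; exact isS_mul ihx ihy
  have P : ∀ x, ∀ β : Ordinal, IsS β → s (f x * β) = x * s β := by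
    intro x
    induction x using Monoid.Coprod.induction_on with
    | inl c =>
      intro β hβ
      have h := f_inl (toAdd c)
      rw [ofAdd_toAdd] at h
      rw [h, s_nat_mul (Nval_pos _) hβ, pf_Nval, ofAdd_toAdd]
    | inr w =>
      induction w using FreeMonoid.inductionOn' with
      | one => intro β hβ; rw [map_one, map_one, one_mul, one_mul]
      | of_mul q w ih =>
        intro β hβ
        obtain ⟨μ, hμ, hq⟩ := q.2
        have hqe : (⟨ω ^ μ + 1, μ, hμ, rfl⟩ : SuccPrime) = q := Subtype.ext hq.symm
        rw [map_mul, map_mul, hF, mul_assoc, hq,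
          s_q_mul hμ (isS_mul (f_isS (Monoid.Coprod.inr w)) hβ), ih β hβ, hqe,
          ← mul_assoc]
    | mul x y ihx ihy =>
      intro β hβ
      rw [map_mul, mul_assoc, ihx _ (isS_mul (f_isS y) hβ), ihy _ hβ, ← mul_assoc]
  have hs1 : s (1 : Ordinal) = 1 := by
    have h := s_nat 1
    rw [Nat.cast_one] at h
    rw [h, pf_one, ofAdd_zero, map_one]
  have hsf : ∀ x, s (f x) = x := by
    intro x
    have h := P x 1 isS_one
    rwa [mul_one, hs1, mul_one] at h
  have hinj : Function.Injective f := fun a b h => by rw [← hsf a, ← hsf b, h]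
  refine ⟨hinj, ?_⟩
  ext α
  simp only [Set.mem_range, Set.mem_setOf_eq]
  constructor
  · rintro ⟨x, rfl⟩
    exact f_isS x
  · induction α using Ordinal.induction with
    | h α IH =>
      intro hα
      by_cases h : α < ω
      · obtain ⟨n, rfl⟩ := Ordinal.lt_omega0.1 h
        have hn : 0 < n := by exact_mod_cast (IsS.pos hα)
        refine ⟨Monoid.Coprod.inl (ofAdd (pf n)), ?_⟩
        rw [f_inl (pf n), Nval_pf hn.ne']
      · obtain ⟨hα', hbS, hblt⟩ := decomp hα h
        obtain ⟨z, hz⟩ := IH _ hblt hbS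
        refine ⟨Monoid.Coprod.inl (ofAdd (pf (nP α))) *
          (Monoid.Coprod.inr (FreeMonoid.of ⟨ω ^ muP α + 1, muP α, muP_pos h, rfl⟩) * z), ?_⟩
        rw [map_mul, map_mul, hz, hF, f_inl (pf (nP α)), Nval_pf (nP_pos hα).ne',
          key_mul (nP_pos hα) (muP_pos h) hbS, ← hα']
end
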